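/- arXiv:2605.00126 — 4 statements merged into one kernel-verified Lean document; each statement's English description precedes it below -/
import Mathlib

section
/- Let γ > 0, ε ∈ [0, 1/2), α* ∈ ℝ, T ≥ 1 a natural number, and let e : ℕ → ℝ and α : ℕ → ℝ satisfy α_{t+1} = α_t + γ·(α* − e_t) for all t with 1 ≤ t ≤ T. If α_1 ∈ [ε, 1−ε] and α_{T+1} ∈ [ε, 1−ε], then |(1/T)·Σ_{t=1}^{T} e_t − α*| ≤ (1 − 2ε)/(γ·T). -/
open Finset

theorem aci_update_telescope {R : Type*} [CommRing R] (γ αstar : R) (e α : ℕ → R) {n : ℕ}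
    (hupd : ∀ t, 1 ≤ t → t ≤ n → α (t + 1) = α t + γ * (αstar - e t)) :
    α (n + 1) = α 1 + γ * (n * αstar - ∑ t ∈ Icc 1 n, e t) := by
  induction n with
  | zero => simp
  | succ k ih =>
    have hk : 1 ≤ k + 1 := Nat.le_add_left 1 k
    rw [hupd (k + 1) hk le_rfl, ih fun t h1 ht => hupd t h1 (ht.trans k.le_succ),
      sum_Icc_succ_top hk]
    push_cast
    ring

theorem aci_average_error_eq {K : Type*} [Field K] [CharZero K] (γ αstar : K) (e α : ℕ → K)
    {T : ℕ} (hγ : γ ≠ 0) (hT : T ≠ 0)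
    (hupd : ∀ t, 1 ≤ t → t ≤ T → α (t + 1) = α t + γ * (αstar - e t)) :
    (1 / (T : K)) * ∑ t ∈ Icc 1 T, e t - αstar = (α 1 - α (T + 1)) / (γ * T) := by
  rw [aci_update_telescope γ αstar e α hupd]
  field_simp
  ring

theorem aci_finite_sample_bound_general (γ ε αstar : ℝ) (hγ : 0 < γ)
    (T : ℕ) (hT : 1 ≤ T)
    (e α : ℕ → ℝ)
    (hupd : ∀ t, 1 ≤ t → t ≤ T → α (t + 1) = α t + γ * (αstar - e t))
    (h1 : α 1 ∈ Set.Icc ε (1 - ε)) (hT1 : α (T + 1) ∈ Set.Icc ε (1 - ε)) :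
    |(1 / (T : ℝ)) * ∑ t ∈ Finset.Icc 1 T, e t - αstar| ≤ (1 - 2 * ε) / (γ * T) := by
  have hγT : 0 < γ * T := mul_pos hγ (by exact_mod_cast hT)
  rw [aci_average_error_eq γ αstar e α hγ.ne' (by omega) hupd, abs_div, abs_of_pos hγT]
  refine div_le_div_of_nonneg_right ?_ hγT.le
  calc |α 1 - α (T + 1)| = dist (α 1) (α (T + 1)) := rfl
    _ ≤ (1 - ε) - ε := Real.dist_le_of_mem_Icc h1 hT1
    _ = 1 - 2 * ε := by ring

/-- Finite-sample ACI coverage bound (Gibbs & Candès): if the levels follow the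
ACI update and both `α 1` and `α (T+1)` lie in `[ε, 1-ε]`, then the empirical
miscoverage frequency deviates from the target by at most `(1 - 2ε)/(γ T)`. -/
theorem aci_finite_sample_bound (γ ε αstar : ℝ) (hγ : 0 < γ)
    (hε0 : 0 ≤ ε) (hε1 : ε < 1 / 2) (T : ℕ) (hT : 1 ≤ T)
    (e α : ℕ → ℝ)
    (hupd : ∀ t, 1 ≤ t → t ≤ T → α (t + 1) = α t + γ * (αstar - e t))
    (h1 : α 1 ∈ Set.Icc ε (1 - ε)) (hT1 : α (T + 1) ∈ Set.Icc ε (1 - ε)) :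
    |(1 / (T : ℝ)) * ∑ t ∈ Finset.Icc 1 T, e t - αstar| ≤ (1 - 2 * ε) / (γ * T) :=
  aci_finite_sample_bound_general γ ε αstar hγ T hT e α hupd h1 hT1
end

section
/- Let γ > 0, ε ∈ [0, 1/2), α* ∈ ℝ, and let e : ℕ → ℝ and α : ℕ → ℝ satisfy α_{t+1} = α_t + γ·(α* − e_t) for all t ≥ 1, with α_t ∈ [ε, 1−ε] for all t ≥ 1. Then the empirical miscoverage frequency converges to the target: (1/T)·Σ_{t=1}^{T} e_t → α* as T → ∞. -/
/-!
Summing the update rule telescopes: `γ · Σ_{t=1}^T (α* − e_t) = α_{T+1} − α_1`. Since the levels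
stay in `[ε, 1 − ε]`, the partial sums of `α* − e_t` are bounded, so dividing by `T` sends the
gap between the empirical miscoverage and `α*` to zero.
-/

open Filter Finset Topology

theorem tendsto_average_of_bounded_deviation {e : ℕ → ℝ} {a b B : ℝ}
    (hb : ∀ T, b ≤ ∑ t ∈ Icc 1 T, (a - e t)) (hB : ∀ T, ∑ t ∈ Icc 1 T, (a - e t) ≤ B) :
    Tendsto (fun T : ℕ => (1 / (T : ℝ)) * ∑ t ∈ Icc 1 T, e t) atTop (𝓝 a) := by
  have hdev : Tendsto (fun T : ℕ => (∑ t ∈ Icc 1 T, (a - e t)) / T) atTop (𝓝 0) :=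
    tendsto_bdd_div_atTop_nhds_zero (.of_forall hb) (.of_forall hB) tendsto_natCast_atTop_atTop
  have hlim : Tendsto (fun T : ℕ => a - (∑ t ∈ Icc 1 T, (a - e t)) / T) atTop (𝓝 a) := by
    simpa using hdev.const_sub a
  refine hlim.congr' ?_
  filter_upwards [eventually_ge_atTop 1] with T hT
  have hT0 : (T : ℝ) ≠ 0 := by exact_mod_cast (by omega : T ≠ 0)
  rw [sum_sub_distrib, sum_const, Nat.card_Icc, nsmul_eq_mul, add_tsub_cancel_right]
  field_simp
  ring

theorem mul_sum_Icc_eq_sub_of_update {γ αstar : ℝ} {e α : ℕ → ℝ}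
    (hupd : ∀ t, 1 ≤ t → α (t + 1) = α t + γ * (αstar - e t)) (T : ℕ) :
    γ * ∑ t ∈ Icc 1 T, (αstar - e t) = α (T + 1) - α 1 := by
  induction T with
  | zero => simp
  | succ n ih =>
    rw [sum_Icc_succ_top (by omega), mul_add, ih, hupd (n + 1) (by omega)]
    ring

theorem aci_asymptotic_coverage_general (γ ε αstar : ℝ) (hγ : 0 < γ)
    (e α : ℕ → ℝ)
    (hupd : ∀ t, 1 ≤ t → α (t + 1) = α t + γ * (αstar - e t))
    (hbound : ∀ t, 1 ≤ t → α t ∈ Set.Icc ε (1 - ε)) :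
    Tendsto (fun T : ℕ => (1 / (T : ℝ)) * ∑ t ∈ Finset.Icc 1 T, e t)
      atTop (nhds αstar) := by
  have hsum (T : ℕ) : ∑ t ∈ Icc 1 T, (αstar - e t) = (α (T + 1) - α 1) / γ := by
    rw [← mul_sum_Icc_eq_sub_of_update hupd T, mul_div_cancel_left₀ _ hγ.ne']
  refine tendsto_average_of_bounded_deviation (b := (ε - (1 - ε)) / γ)
    (B := (1 - ε - ε) / γ) (fun T => ?_) (fun T => ?_)
  all_goals
    obtain ⟨h1, h1'⟩ := hbound 1 le_rfl
    obtain ⟨h2, h2'⟩ := hbound (T + 1) (by omega)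
    rw [hsum]
    gcongr

/-- Asymptotic ACI coverage guarantee: if the levels follow the ACI update for all
`t ≥ 1` and remain in `[ε, 1-ε]`, then the empirical miscoverage frequency
converges to the target `αstar`. -/
theorem aci_asymptotic_coverage (γ ε αstar : ℝ) (hγ : 0 < γ)
    (hε0 : 0 ≤ ε) (hε1 : ε < 1 / 2)
    (e α : ℕ → ℝ)
    (hupd : ∀ t, 1 ≤ t → α (t + 1) = α t + γ * (αstar - e t))
    (hbound : ∀ t, 1 ≤ t → α t ∈ Set.Icc ε (1 - ε)) :
    Tendsto (fun T : ℕ => (1 / (T : ℝ)) * ∑ t ∈ Finset.Icc 1 T, e t)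
      atTop (nhds αstar) :=
  aci_asymptotic_coverage_general γ ε αstar hγ e α hupd hbound
end

section
/- Let γ > 0, ε ∈ [0, 1/2), α* ∈ ℝ, and for each t let err_t = 1 if y_t ∉ [l_t, u_t] and err_t = 0 otherwise, where y_t ∈ ℝ and [l_t, u_t] are the ACI prediction intervals. Suppose the ACI levels satisfy α_{t+1} = α_t + γ·(α* − err_t) for all t ≥ 1 with α_t ∈ [ε, 1−ε] for all t ≥ 1. Then the empirical coverage frequency converges: (1/T)·Σ_{t=1}^{T} 1{y_t ∈ [l_t, u_t]} → 1 − α* as T → ∞. -/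
open Filter Finset Topology

/-!
Summing the update rule telescopes: `γ * (T * αstar - ∑_{t ≤ T} err t) = α (T + 1) - α 1`.
The right-hand side stays bounded because the levels stay in a fixed interval, so after dividing
by `γ * T` the average miscoverage tends to `αstar`, and coverage is its complement.
-/

lemma aci_level_sub_eq {γ αstar : ℝ} {err α : ℕ → ℝ}
    (hupd : ∀ t, 1 ≤ t → α (t + 1) = α t + γ * (αstar - err t)) (T : ℕ) :
    α (T + 1) - α 1 = γ * (T * αstar - ∑ t ∈ Icc 1 T, err t) := by
  obtain rfl | hT := T.eq_zero_or_pos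
  · simp
  calc α (T + 1) - α 1 = ∑ t ∈ Icc 1 T, (α (t + 1) - α t) := (sum_Icc_sub hT α).symm
    _ = ∑ t ∈ Icc 1 T, γ * (αstar - err t) :=
      sum_congr rfl fun t ht => by rw [hupd t (mem_Icc.1 ht).1]; ring
    _ = γ * (T * αstar - ∑ t ∈ Icc 1 T, err t) := by
      rw [← mul_sum, sum_sub_distrib, sum_const, Nat.card_Icc, nsmul_eq_mul]
      simp

lemma tendsto_aci_average_miscoverage {γ αstar a b : ℝ} {err α : ℕ → ℝ} (hγ : γ ≠ 0)
    (hupd : ∀ t, 1 ≤ t → α (t + 1) = α t + γ * (αstar - err t))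
    (hbdd : ∀ t, 1 ≤ t → α t ∈ Set.Icc a b) :
    Tendsto (fun T : ℕ => (∑ t ∈ Icc 1 T, err t) / T) atTop (𝓝 αstar) := by
  have hdrift : Tendsto (fun T : ℕ => (α (T + 1) - α 1) / γ * (T : ℝ)⁻¹) atTop (𝓝 0) := by
    refine isBoundedUnder_le_mul_tendsto_zero (isBoundedUnder_of ⟨(b - a) / |γ|, fun T => ?_⟩)
      tendsto_inv_atTop_nhds_zero_nat
    obtain ⟨hT₁, hT₂⟩ := hbdd (T + 1) le_add_self
    obtain ⟨h₁, h₂⟩ := hbdd 1 le_rfl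
    simp only [Function.comp_apply, Real.norm_eq_abs, abs_div]
    gcongr
    exact abs_sub_le_iff.2 ⟨by linarith, by linarith⟩
  refine (by simpa using hdrift.const_sub αstar : Tendsto _ atTop (𝓝 αstar)).congr' ?_
  filter_upwards [eventually_ne_atTop 0] with T hT
  rw [aci_level_sub_eq hupd T]
  field_simp
  ring

theorem aci_empirical_coverage_general (γ ε αstar : ℝ) (hγ : 0 < γ)
    (y l u : ℕ → ℝ) (err α : ℕ → ℝ)
    (herr : ∀ t, err t = if y t ∈ Set.Icc (l t) (u t) then (0 : ℝ) else 1)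
    (hupd : ∀ t, 1 ≤ t → α (t + 1) = α t + γ * (αstar - err t))
    (hbound : ∀ t, 1 ≤ t → α t ∈ Set.Icc ε (1 - ε)) :
    Tendsto
      (fun T : ℕ =>
        (1 / (T : ℝ)) *
          ∑ t ∈ Finset.Icc 1 T, (if y t ∈ Set.Icc (l t) (u t) then (1 : ℝ) else 0))
      atTop (nhds (1 - αstar)) := by
  have hcover : ∀ t, (if y t ∈ Set.Icc (l t) (u t) then (1 : ℝ) else 0) = 1 - err t := by
    intro t
    rw [herr t]
    split_ifs <;> norm_num
  refine ((tendsto_aci_average_miscoverage hγ.ne' hupd hbound).const_sub 1).congr' ?_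
  filter_upwards [eventually_ne_atTop 0] with T hT
  simp only [hcover, sum_sub_distrib, sum_const, Nat.card_Icc, nsmul_eq_mul]
  field_simp
  simp

/-- Asymptotic ACI coverage guarantee in terms of the prediction intervals:
with `err t = 1` if `y t ∉ [l t, u t]` and `0` otherwise, if the levels follow
the ACI update and remain in `[ε, 1-ε]`, then the empirical coverage frequency
converges to `1 - αstar`. -/
theorem aci_empirical_coverage (γ ε αstar : ℝ) (hγ : 0 < γ)
    (hε0 : 0 ≤ ε) (hε1 : ε < 1 / 2)
    (y l u : ℕ → ℝ) (err α : ℕ → ℝ)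
    (herr : ∀ t, err t = if y t ∈ Set.Icc (l t) (u t) then (0 : ℝ) else 1)
    (hupd : ∀ t, 1 ≤ t → α (t + 1) = α t + γ * (αstar - err t))
    (hbound : ∀ t, 1 ≤ t → α t ∈ Set.Icc ε (1 - ε)) :
    Tendsto
      (fun T : ℕ =>
        (1 / (T : ℝ)) *
          ∑ t ∈ Finset.Icc 1 T, (if y t ∈ Set.Icc (l t) (u t) then (1 : ℝ) else 0))
      atTop (nhds (1 - αstar)) :=
  aci_empirical_coverage_general γ ε αstar hγ y l u err α herr hupd hbound
end

section
/- Let X and X' be independent, identically distributed, integrable real random variables on a probability space, let F(x) = P(X ≤ x) be their common CDF, and let y ∈ ℝ. Then ∫_ℝ (F(x) − 1{y ≤ x})² dx = E|X − y| − (1/2)·E|X − X'|. -/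
/-!
For reals `a, b`, the levels `x` at which exactly one of `a ≤ x`, `b ≤ x` holds form an
interval of length `|a - b|`. By Tonelli, `E|Z - W| = ∫ P(exactly one of Z ≤ x, W ≤ x) dx`.
At a fixed level `x`, with `F = F(x)` and `c = 1{y ≤ x}`, that probability is `F + c - 2cF`
for `W = y` and, by independence and equality of laws, `2F(1 - F)` for `W = X'`; the first
minus half the second is `(F - c)²`.
-/
open MeasureTheory ProbabilityTheory Set
open scoped symmDiff

theorem Real.volume_Ici_symmDiff_Ici (a b : ℝ) : volume (Ici a ∆ Ici b) = ‖a - b‖ₑ := by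
  wlog hab : a ≤ b generalizing a b
  · rw [symmDiff_comm, ← enorm_neg, neg_sub]
    exact this b a (le_of_not_ge hab)
  rw [symmDiff_of_ge (Ici_subset_Ici.2 hab), Ici_sdiff_Ici, Real.volume_Ico,
    Real.enorm_eq_ofReal_abs, abs_sub_comm, abs_of_nonneg (sub_nonneg.2 hab)]

namespace MeasureTheory

variable {Ω : Type*} [MeasurableSpace Ω] {μ : Measure Ω}

theorem measureReal_symmDiff_eq_add_sub_inter [IsFiniteMeasure μ] {s t : Set Ω}
    (hs : MeasurableSet s) (ht : MeasurableSet t) :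
    μ.real (s ∆ t) = μ.real s + μ.real t - 2 * μ.real (s ∩ t) := by
  have hs' := measureReal_inter_add_sdiff (μ := μ) (s := s) ht
  have ht' := measureReal_inter_add_sdiff (μ := μ) (s := t) hs
  rw [inter_comm] at ht'
  rw [measureReal_symmDiff_eq hs ht]
  linarith

section Layers

variable {Z W : Ω → ℝ}

theorem measurableSet_setOf_le_symmDiff_setOf_le (hZ : Measurable Z) (hW : Measurable W) :
    MeasurableSet ({p : Ω × ℝ | Z p.1 ≤ p.2} ∆ {p | W p.1 ≤ p.2}) :=
  (measurableSet_le (hZ.comp measurable_fst) measurable_snd).symmDiff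
    (measurableSet_le (hW.comp measurable_fst) measurable_snd)

theorem lintegral_enorm_sub_eq_lintegral_measure_symmDiff [SFinite μ]
    (hZ : Measurable Z) (hW : Measurable W) :
    ∫⁻ ω, ‖Z ω - W ω‖ₑ ∂μ = ∫⁻ x, μ ({ω | Z ω ≤ x} ∆ {ω | W ω ≤ x}) := by
  have hS := measurableSet_setOf_le_symmDiff_setOf_le hZ hW
  calc ∫⁻ ω, ‖Z ω - W ω‖ₑ ∂μ
      = ∫⁻ ω, volume (Ici (Z ω) ∆ Ici (W ω)) ∂μ := by
        simp only [Real.volume_Ici_symmDiff_Ici]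
    _ = (μ.prod volume) ({p : Ω × ℝ | Z p.1 ≤ p.2} ∆ {p | W p.1 ≤ p.2}) :=
        (Measure.prod_apply hS).symm
    _ = ∫⁻ x, μ ({ω | Z ω ≤ x} ∆ {ω | W ω ≤ x}) := Measure.prod_apply_symm hS

theorem measurable_measure_symmDiff_setOf_le [SFinite μ]
    (hZ : Measurable Z) (hW : Measurable W) :
    Measurable fun x => μ ({ω | Z ω ≤ x} ∆ {ω | W ω ≤ x}) :=
  measurable_measure_prodMk_right (measurableSet_setOf_le_symmDiff_setOf_le hZ hW)

variable [IsFiniteMeasure μ]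

theorem integrable_measureReal_symmDiff_setOf_le (hZ : Measurable Z) (hW : Measurable W)
    (hZW : Integrable (fun ω => Z ω - W ω) μ) :
    Integrable fun x => μ.real ({ω | Z ω ≤ x} ∆ {ω | W ω ≤ x}) := by
  refine integrable_toReal_of_lintegral_ne_top
    (measurable_measure_symmDiff_setOf_le hZ hW).aemeasurable ?_
  rw [← lintegral_enorm_sub_eq_lintegral_measure_symmDiff hZ hW]
  exact hZW.2.ne

theorem integral_measureReal_symmDiff_setOf_le (hZ : Measurable Z) (hW : Measurable W) :
    ∫ x, μ.real ({ω | Z ω ≤ x} ∆ {ω | W ω ≤ x}) = ∫ ω, |Z ω - W ω| ∂μ := by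
  simp only [← Real.norm_eq_abs]
  rw [integral_norm_eq_lintegral_enorm (f := fun ω => Z ω - W ω) (by fun_prop),
    lintegral_enorm_sub_eq_lintegral_measure_symmDiff hZ hW, ← integral_toReal]
  · rfl
  · exact (measurable_measure_symmDiff_setOf_le hZ hW).aemeasurable
  · exact ae_of_all _ fun x => measure_lt_top μ _

end Layers

theorem sq_measureReal_sub_ite [IsProbabilityMeasure μ] {s t : Set Ω}
    (hs : MeasurableSet s) (ht : MeasurableSet t) (hts : μ t = μ s)
    (hst : μ (s ∩ t) = μ s * μ t) (p : Prop) [Decidable p] :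
    (μ.real s - if p then 1 else 0) ^ 2 = μ.real (s ∆ {_ω | p}) - 1 / 2 * μ.real (s ∆ t) := by
  have hts' : μ.real t = μ.real s := by rw [measureReal_def, hts, measureReal_def]
  have hst' : μ.real (s ∩ t) = μ.real s * μ.real t := by
    rw [measureReal_def, hst, ENNReal.toReal_mul, measureReal_def, measureReal_def]
  rw [measureReal_symmDiff_eq_add_sub_inter hs (MeasurableSet.const p),
    measureReal_symmDiff_eq_add_sub_inter hs ht, hst', hts']
  by_cases hp : p
  · simp only [hp, if_true, ofPred_true, probReal_univ, inter_univ]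
    ring
  · simp only [hp, if_false, ofPred_false, measureReal_empty, inter_empty]
    ring

end MeasureTheory

/-- Energy-form representation of the CRPS: for i.i.d. integrable real random
variables `X, X'` with common CDF `F`,
`∫ (F(x) − 1{y ≤ x})² dx = E|X − y| − ½ E|X − X'|`. -/
theorem crps_energy_form (Ω : Type*) [MeasureSpace Ω] [IsProbabilityMeasure (ℙ : Measure Ω)]
    (X X' : Ω → ℝ) (hmeas : Measurable X) (hmeas' : Measurable X')
    (hint : Integrable X) (hint' : Integrable X')
    (hindep : IndepFun X X')
    (hident : Measure.map X ℙ = Measure.map X' ℙ)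
    (y : ℝ) :
    ∫ x : ℝ, (((ℙ {ω | X ω ≤ x}).toReal) - (if y ≤ x then (1 : ℝ) else 0)) ^ 2 =
      (∫ ω, |X ω - y|) - (1 / 2) * ∫ ω, |X ω - X' ω| := by
  have hXX' : IdentDistrib X X' := ⟨hmeas.aemeasurable, hmeas'.aemeasurable, hident⟩
  have hy := integrable_measureReal_symmDiff_setOf_le hmeas measurable_const
    (hint.sub (integrable_const y))
  have hX' := integrable_measureReal_symmDiff_setOf_le hmeas hmeas' (hint.sub hint')
  rw [← integral_measureReal_symmDiff_setOf_le hmeas measurable_const,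
    ← integral_measureReal_symmDiff_setOf_le hmeas hmeas', ← integral_const_mul,
    ← integral_sub hy (hX'.const_mul _)]
  refine integral_congr_ae (ae_of_all _ fun x => ?_)
  exact sq_measureReal_sub_ite (measurableSet_le hmeas measurable_const)
    (measurableSet_le hmeas' measurable_const) (hXX'.measure_mem_eq measurableSet_Iic).symm
    (hindep.measure_inter_preimage_eq_mul _ _ measurableSet_Iic measurableSet_Iic) (y ≤ x)
end
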